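/- Let T = (c₁,0,c₁,0,0,0,f₁,f₂,f₃,f₄,t₁,t₂) and T′ = (c₁,0,c₁,0,0,0,f₁′,f₂′,f₃′,f₄′,t₁′,t₂′) be tuples in ℤ¹² with the same value c₁ ≠ 0 (so c₃ = c₁ and c₂ = c₄ = c₅ = c₆ = 0), and suppose gcd(c₁,f₂,f₃) ∣ f₁, gcd(c₁,f₂′,f₃′) ∣ f₁′, gcd(c₁,f₁,f₂) ∣ f₃ and gcd(c₁,f₁′,f₂′) ∣ f₃′. Then T and T′ are ψ-equivalent if and only if: f₁ ≡ f₁′ (mod c₁); f₂ = f₂′; f₃ ≡ f₃′ (mod c₁); f₄ ≡ f₄′ (mod c₁); c₁t₁ + f₁f₄ ≡ c₁t₁′ + f₁′f₄′ (mod c₁·gcd(c₁,f₁,f₂,f₃)); and c₁t₂ + f₃f₄ ≡ c₁t₂′ + f₃′f₄′ (mod c₁·gcd(c₁,f₁,f₂,f₃)). -/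

import Mathlib

/-!
On tuples with `c = (c₁,0,c₁,0,0,0)`, each move changes `f₁, f₃, f₄` by multiples of `c₁`,
fixes `f₂`, and changes `c₁t₁ + f₁f₄` and `c₁t₂ + f₃f₄` by `c₁` times one of `0, ±f₁, ±f₂, ±f₃`.
A common divisor `d` of `c₁, f₁, f₂, f₃` stays one along a chain of moves, so the congruences of
the theorem are invariants.

Conversely, `ψ₃₄, ψ₁₄, ψ₂₁` bring `f₁, f₃, f₄` to any representatives modulo `c₁`, and the
invariants then pin `(t₁, t₂)` down modulo `d = gcd(c₁,f₁,f₂,f₃)`. Every move commutes with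
translations of `(t₁, t₂)`, so the translations `p` with `x ~ x + p` form a subgroup of `ℤ²`
depending only on the class of `x`. Single moves put `(f₂,0), (f₃,0), (0,f₁), (0,f₂)` in it;
comparing `(f₃,0)` with `(f₃+c₁,0)`, available after `ψ₁₄`, gives `(c₁,0)`, and likewise `(0,c₁)`.
So it contains `gcd(c₁,f₂,f₃)ℤ × gcd(c₁,f₁,f₂)ℤ`, which is `dℤ × dℤ` under the hypotheses.
-/

/-- A 12-tuple of integers, with coordinates written `(c₁,…,c₆,f₁,…,f₄,t₁,t₂)`. -/
structure Tuple : Type where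
  c1 : ℤ
  c2 : ℤ
  c3 : ℤ
  c4 : ℤ
  c5 : ℤ
  c6 : ℤ
  f1 : ℤ
  f2 : ℤ
  f3 : ℤ
  f4 : ℤ
  t1 : ℤ
  t2 : ℤ

/-- The move ψ₂₁ : f₃↦f₃+c₅, f₄↦f₄−c₁, t₁↦t₁+f₁. -/
def psi21 : Equiv.Perm Tuple where
  toFun x := { x with f3 := x.f3 + x.c5, f4 := x.f4 - x.c1, t1 := x.t1 + x.f1 }
  invFun x := { x with f3 := x.f3 - x.c5, f4 := x.f4 + x.c1, t1 := x.t1 - x.f1 }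
  left_inv x := by cases x; simp
  right_inv x := by cases x; simp

/-- The move ψ₄₁ : f₂↦f₂+c₆, f₃↦f₃−c₅, t₂↦t₂−f₁. -/
def psi41 : Equiv.Perm Tuple where
  toFun x := { x with f2 := x.f2 + x.c6, f3 := x.f3 - x.c5, t2 := x.t2 - x.f1 }
  invFun x := { x with f2 := x.f2 - x.c6, f3 := x.f3 + x.c5, t2 := x.t2 + x.f1 }
  left_inv x := by cases x; simp
  right_inv x := by cases x; simp

/-- The move ψ₁₂ : f₃↦f₃−c₄, f₄↦f₄+c₂, t₁↦t₁+f₂. -/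
def psi12 : Equiv.Perm Tuple where
  toFun x := { x with f3 := x.f3 - x.c4, f4 := x.f4 + x.c2, t1 := x.t1 + x.f2 }
  invFun x := { x with f3 := x.f3 + x.c4, f4 := x.f4 - x.c2, t1 := x.t1 - x.f2 }
  left_inv x := by cases x; simp
  right_inv x := by cases x; simp

/-- The move ψ₃₂ : f₁↦f₁+c₆, f₄↦f₄−c₂, t₂↦t₂−f₂. -/
def psi32 : Equiv.Perm Tuple where
  toFun x := { x with f1 := x.f1 + x.c6, f4 := x.f4 - x.c2, t2 := x.t2 - x.f2 }
  invFun x := { x with f1 := x.f1 - x.c6, f4 := x.f4 + x.c2, t2 := x.t2 + x.f2 }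
  left_inv x := by cases x; simp
  right_inv x := by cases x; simp

/-- The move ψ₄₃ : f₁↦f₁+c₅, f₂↦f₂−c₄, t₁↦t₁+f₃. -/
def psi43 : Equiv.Perm Tuple where
  toFun x := { x with f1 := x.f1 + x.c5, f2 := x.f2 - x.c4, t1 := x.t1 + x.f3 }
  invFun x := { x with f1 := x.f1 - x.c5, f2 := x.f2 + x.c4, t1 := x.t1 - x.f3 }
  left_inv x := by cases x; simp
  right_inv x := by cases x; simp

/-- The move ψ₂₃ : f₁↦f₁−c₅, f₄↦f₄+c₃, t₂↦t₂−f₃. -/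
def psi23 : Equiv.Perm Tuple where
  toFun x := { x with f1 := x.f1 - x.c5, f4 := x.f4 + x.c3, t2 := x.t2 - x.f3 }
  invFun x := { x with f1 := x.f1 + x.c5, f4 := x.f4 - x.c3, t2 := x.t2 + x.f3 }
  left_inv x := by cases x; simp
  right_inv x := by cases x; simp

/-- The move ψ₃₄ : f₁↦f₁−c₁, f₂↦f₂+c₂, t₁↦t₁+f₄. -/
def psi34 : Equiv.Perm Tuple where
  toFun x := { x with f1 := x.f1 - x.c1, f2 := x.f2 + x.c2, t1 := x.t1 + x.f4 }
  invFun x := { x with f1 := x.f1 + x.c1, f2 := x.f2 - x.c2, t1 := x.t1 - x.f4 }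
  left_inv x := by cases x; simp
  right_inv x := by cases x; simp

/-- The move ψ₁₄ : f₂↦f₂−c₂, f₃↦f₃+c₃, t₂↦t₂−f₄. -/
def psi14 : Equiv.Perm Tuple where
  toFun x := { x with f2 := x.f2 - x.c2, f3 := x.f3 + x.c3, t2 := x.t2 - x.f4 }
  invFun x := { x with f2 := x.f2 + x.c2, f3 := x.f3 - x.c3, t2 := x.t2 + x.f4 }
  left_inv x := by cases x; simp
  right_inv x := by cases x; simp

/-- The list of the eight ψ-moves. -/
def psiMoves : List (Equiv.Perm Tuple) :=
  [psi21, psi41, psi12, psi32, psi43, psi23, psi34, psi14]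

/-- Two tuples are ψ-equivalent if one is obtained from the other by a finite
composition of the eight ψ-moves and their inverses, i.e. they are related by the
equivalence relation generated by single applications of the moves. -/
def PsiEquiv : Tuple → Tuple → Prop :=
  Relation.EqvGen (fun x y => ∃ g ∈ psiMoves, g x = y)

open Relation

theorem Relation.EqvGen.rel_of_invariant {α : Type*} {s r : α → α → Prop} {P : α → Prop}
    (hr : Equivalence r) (hP : ∀ {x y}, s x y → (P x ↔ P y))
    (hs : ∀ {x y}, s x y → P x → r x y) {x y : α} (h : EqvGen s x y) (hx : P x) : r x y := by
  suffices (P x ↔ P y) ∧ (P x → r x y) from this.2 hx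
  clear hx
  induction h with
  | rel x y hxy => exact ⟨hP hxy, hs hxy⟩
  | refl x => exact ⟨Iff.rfl, fun _ => hr.refl x⟩
  | symm x y _ ih => exact ⟨ih.1.symm, fun hy => hr.symm (ih.2 (ih.1.2 hy))⟩
  | trans x y z _ _ ih ih' =>
    exact ⟨ih.1.trans ih'.1, fun hx => hr.trans (ih.2 hx) (ih'.2 (ih.1.1 hx))⟩

theorem Equivalence.rel_of_rel_succ {α : Type*} {r : α → α → Prop} (hr : Equivalence r)
    {σ : ℤ → α} (h : ∀ k, r (σ k) (σ (k + 1))) (n : ℤ) : r (σ 0) (σ n) := by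
  induction n using Int.induction_on with
  | zero => exact hr.refl _
  | succ i ih => exact hr.trans ih (h i)
  | pred i ih => exact hr.trans ih (hr.symm (by simpa using h (-i - 1)))

theorem Int.zmultiples_gcd_gcd_le {H : AddSubgroup ℤ} {a b c : ℤ} (ha : a ∈ H) (hb : b ∈ H)
    (hc : c ∈ H) : AddSubgroup.zmultiples (Int.gcd a (Int.gcd b c) : ℤ) ≤ H := by
  rw [← Int.zmultiples_sup, ← Int.zmultiples_sup]
  simp [AddSubgroup.zmultiples_le, ha, hb, hc]

theorem mem_psiMoves {g : Equiv.Perm Tuple} :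
    g ∈ psiMoves ↔ g = psi21 ∨ g = psi41 ∨ g = psi12 ∨ g = psi32 ∨ g = psi43 ∨ g = psi23 ∨
      g = psi34 ∨ g = psi14 := by
  simp [psiMoves]

namespace PsiEquiv

theorem equivalence : Equivalence PsiEquiv := EqvGen.is_equivalence _

theorem refl (x : Tuple) : PsiEquiv x x := EqvGen.refl x

theorem symm {x y : Tuple} (h : PsiEquiv x y) : PsiEquiv y x := EqvGen.symm _ _ h

theorem trans {x y z : Tuple} (h : PsiEquiv x y) (h' : PsiEquiv y z) : PsiEquiv x z :=
  EqvGen.trans _ _ _ h h'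

theorem of_move {g : Equiv.Perm Tuple} (hg : g ∈ psiMoves) {x y : Tuple} (h : g x = y) :
    PsiEquiv x y :=
  EqvGen.rel _ _ ⟨g, hg, h⟩

theorem of_move_iterate {g : Equiv.Perm Tuple} (hg : g ∈ psiMoves) {σ : ℤ → Tuple}
    (h : ∀ k, g (σ k) = σ (k + 1)) (n : ℤ) : PsiEquiv (σ 0) (σ n) :=
  equivalence.rel_of_rel_succ (fun k => of_move hg (h k)) n

end PsiEquiv

def case2 (c f1 f2 f3 f4 t1 t2 : ℤ) : Tuple := ⟨c, 0, c, 0, 0, 0, f1, f2, f3, f4, t1, t2⟩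

section Invariants

variable {c d : ℤ}

/-- Fixing a divisor `d` of `gcd(c, f₁, f₂, f₃)` in advance, instead of using the gcd of each
tuple, makes the modulus `c * d` of `Case2Congr` the same for all tuples of a class. -/
def Case2Slice (c d : ℤ) (x : Tuple) : Prop :=
  x.c1 = c ∧ x.c2 = 0 ∧ x.c3 = c ∧ x.c4 = 0 ∧ x.c5 = 0 ∧ x.c6 = 0 ∧
    d ∣ x.f1 ∧ d ∣ x.f2 ∧ d ∣ x.f3

def Case2Congr (c d : ℤ) (x y : Tuple) : Prop :=
  x.f1 ≡ y.f1 [ZMOD c] ∧ x.f2 = y.f2 ∧ x.f3 ≡ y.f3 [ZMOD c] ∧ x.f4 ≡ y.f4 [ZMOD c] ∧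
    c * x.t1 + x.f1 * x.f4 ≡ c * y.t1 + y.f1 * y.f4 [ZMOD c * d] ∧
    c * x.t2 + x.f3 * x.f4 ≡ c * y.t2 + y.f3 * y.f4 [ZMOD c * d]

theorem case2Congr_equivalence : Equivalence (Case2Congr c d) where
  refl _ := ⟨.refl _, rfl, .refl _, .refl _, .refl _, .refl _⟩
  symm := fun ⟨h1, h2, h3, h4, h5, h6⟩ => ⟨h1.symm, h2.symm, h3.symm, h4.symm, h5.symm, h6.symm⟩
  trans := fun ⟨h1, h2, h3, h4, h5, h6⟩ ⟨h1', h2', h3', h4', h5', h6'⟩ =>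
    ⟨h1.trans h1', h2.trans h2', h3.trans h3', h4.trans h4', h5.trans h5', h6.trans h6'⟩

theorem case2Slice_move_iff (hd : d ∣ c) {g : Equiv.Perm Tuple} (hg : g ∈ psiMoves)
    (x : Tuple) : Case2Slice c d (g x) ↔ Case2Slice c d x := by
  obtain ⟨c1, c2, c3, c4, c5, c6, f1, f2, f3, f4, t1, t2⟩ := x
  rcases mem_psiMoves.1 hg with rfl | rfl | rfl | rfl | rfl | rfl | rfl | rfl <;>
  simp only [Case2Slice, psi21, psi41, psi12, psi32, psi43, psi23, psi34, psi14,
    Equiv.coe_fn_mk] <;>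
  constructor <;> rintro ⟨rfl, rfl, rfl, rfl, rfl, rfl, h⟩ <;>
  simp_all [dvd_add_left hd, dvd_sub_left hd]

theorem case2Congr_move {g : Equiv.Perm Tuple} (hg : g ∈ psiMoves) {x : Tuple}
    (hx : Case2Slice c d x) : Case2Congr c d x (g x) := by
  obtain ⟨c1, c2, c3, c4, c5, c6, f1, f2, f3, f4, t1, t2⟩ := x
  dsimp only [Case2Slice] at hx
  obtain ⟨rfl, rfl, rfl, rfl, rfl, rfl, ⟨a1, rfl⟩, ⟨a2, rfl⟩, ⟨a3, rfl⟩⟩ := hx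
  rcases mem_psiMoves.1 hg with rfl | rfl | rfl | rfl | rfl | rfl | rfl | rfl <;>
  simp only [Case2Congr, psi21, psi41, psi12, psi32, psi43, psi23, psi34, psi14,
    Equiv.coe_fn_mk, Int.modEq_iff_dvd] <;>
  refine ⟨?_, ?_, ?_, ?_, ?_, ?_⟩ <;> (try ring_nf) <;> simp

theorem Case2Congr.of_psiEquiv (hd : d ∣ c) {x y : Tuple} (hx : Case2Slice c d x)
    (h : PsiEquiv x y) : Case2Congr c d x y :=
  h.rel_of_invariant case2Congr_equivalence
    (by rintro _ _ ⟨g, hg, rfl⟩; exact (case2Slice_move_iff hd hg _).symm)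
    (by rintro _ _ ⟨g, hg, rfl⟩; exact case2Congr_move hg) hx

theorem case2Slice_case2_gcd (c f1 f2 f3 f4 t1 t2 : ℤ) :
    Case2Slice c (Int.gcd c (Int.gcd f1 (Int.gcd f2 f3))) (case2 c f1 f2 f3 f4 t1 t2) :=
  ⟨rfl, rfl, rfl, rfl, rfl, rfl, (Int.gcd_dvd_right _ _).trans (Int.gcd_dvd_left _ _),
    ((Int.gcd_dvd_right _ _).trans (Int.gcd_dvd_right _ _)).trans (Int.gcd_dvd_left _ _),
    ((Int.gcd_dvd_right _ _).trans (Int.gcd_dvd_right _ _)).trans (Int.gcd_dvd_right _ _)⟩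

end Invariants

section Translations

def Tuple.translate (x : Tuple) (p : ℤ × ℤ) : Tuple :=
  { x with t1 := x.t1 + p.1, t2 := x.t2 + p.2 }

@[simp]
theorem Tuple.translate_zero (x : Tuple) : x.translate 0 = x := by
  simp [Tuple.translate]

@[simp]
theorem Tuple.translate_translate (x : Tuple) (p q : ℤ × ℤ) :
    (x.translate p).translate q = x.translate (p + q) := by
  simp [Tuple.translate, add_assoc]

theorem move_translate {g : Equiv.Perm Tuple} (hg : g ∈ psiMoves) (x : Tuple) (p : ℤ × ℤ) :
    g (x.translate p) = (g x).translate p := by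
  rcases mem_psiMoves.1 hg with rfl | rfl | rfl | rfl | rfl | rfl | rfl | rfl <;>
  simp [Tuple.translate, psi21, psi41, psi12, psi32, psi43, psi23, psi34, psi14,
    add_right_comm, sub_add_eq_add_sub]

theorem PsiEquiv.translate {x y : Tuple} (h : PsiEquiv x y) (p : ℤ × ℤ) :
    PsiEquiv (x.translate p) (y.translate p) := by
  induction h with
  | rel x y hxy =>
    obtain ⟨g, hg, rfl⟩ := hxy
    exact PsiEquiv.of_move hg (move_translate hg x p)
  | refl x => exact PsiEquiv.refl _
  | symm x y _ ih => exact ih.symm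
  | trans x y z _ _ ih ih' => exact ih.trans ih'

def shifts (x : Tuple) : AddSubgroup (ℤ × ℤ) where
  carrier := {p | PsiEquiv x (x.translate p)}
  zero_mem' := by simpa using PsiEquiv.refl x
  add_mem' {p q} hp hq := by simpa [add_comm p] using hp.trans (hq.translate p)
  neg_mem' {p} hp := by simpa using (hp.translate (-p)).symm

theorem PsiEquiv.shifts_eq {x y : Tuple} (h : PsiEquiv x y) : shifts x = shifts y := by
  ext p
  exact ⟨fun hp => h.symm.trans (hp.trans (h.translate p)),
    fun hp => h.trans (hp.trans (h.translate p).symm)⟩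

theorem mem_shifts_of_move {g : Equiv.Perm Tuple} (hg : g ∈ psiMoves) {x : Tuple}
    {p : ℤ × ℤ} (h : g x = x.translate p) : p ∈ shifts x :=
  PsiEquiv.of_move hg h

end Translations

section Case2Moves

variable {c f1 f2 f3 f4 t1 t2 : ℤ}

theorem case2_translate (p : ℤ × ℤ) :
    (case2 c f1 f2 f3 f4 t1 t2).translate p = case2 c f1 f2 f3 f4 (t1 + p.1) (t2 + p.2) :=
  rfl

theorem psiEquiv_case2_sub_f1 (k : ℤ) :
    PsiEquiv (case2 c f1 f2 f3 f4 t1 t2) (case2 c (f1 - k * c) f2 f3 f4 (t1 + k * f4) t2) := by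
  simpa using PsiEquiv.of_move_iterate (g := psi34) (by simp [psiMoves])
    (σ := fun k => case2 c (f1 - k * c) f2 f3 f4 (t1 + k * f4) t2) (fun k => by
      simp only [psi34, case2, Equiv.coe_fn_mk, Tuple.mk.injEq]; ring_nf; simp only [and_self]) k

theorem psiEquiv_case2_add_f3 (k : ℤ) :
    PsiEquiv (case2 c f1 f2 f3 f4 t1 t2) (case2 c f1 f2 (f3 + k * c) f4 t1 (t2 - k * f4)) := by
  simpa using PsiEquiv.of_move_iterate (g := psi14) (by simp [psiMoves])
    (σ := fun k => case2 c f1 f2 (f3 + k * c) f4 t1 (t2 - k * f4)) (fun k => by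
      simp only [psi14, case2, Equiv.coe_fn_mk, Tuple.mk.injEq]; ring_nf; simp only [and_self]) k

theorem psiEquiv_case2_sub_f4 (k : ℤ) :
    PsiEquiv (case2 c f1 f2 f3 f4 t1 t2) (case2 c f1 f2 f3 (f4 - k * c) (t1 + k * f1) t2) := by
  simpa using PsiEquiv.of_move_iterate (g := psi21) (by simp [psiMoves])
    (σ := fun k => case2 c f1 f2 f3 (f4 - k * c) (t1 + k * f1) t2) (fun k => by
      simp only [psi21, case2, Equiv.coe_fn_mk, Tuple.mk.injEq]; ring_nf; simp only [and_self]) k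

theorem exists_psiEquiv_case2_of_modEq {f1' f3' f4' : ℤ} (hf1 : f1 ≡ f1' [ZMOD c])
    (hf3 : f3 ≡ f3' [ZMOD c]) (hf4 : f4 ≡ f4' [ZMOD c]) :
    ∃ s1 s2 : ℤ, PsiEquiv (case2 c f1 f2 f3 f4 t1 t2) (case2 c f1' f2 f3' f4' s1 s2) := by
  obtain ⟨k1, hk1⟩ := hf1.symm.dvd
  obtain ⟨k3, hk3⟩ := hf3.dvd
  obtain ⟨k4, hk4⟩ := hf4.symm.dvd
  obtain rfl : f1' = f1 - k1 * c := by linarith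
  obtain rfl : f3' = f3 + k3 * c := by linarith
  obtain rfl : f4' = f4 - k4 * c := by linarith
  exact ⟨_, _, (psiEquiv_case2_sub_f1 k1).trans
    ((psiEquiv_case2_add_f3 k3).trans (psiEquiv_case2_sub_f4 k4))⟩

theorem f2_zero_mem_shifts : (f2, 0) ∈ shifts (case2 c f1 f2 f3 f4 t1 t2) :=
  mem_shifts_of_move (g := psi12) (by simp [psiMoves]) (by simp [psi12, case2, Tuple.translate])

theorem f3_zero_mem_shifts : (f3, 0) ∈ shifts (case2 c f1 f2 f3 f4 t1 t2) :=
  mem_shifts_of_move (g := psi43) (by simp [psiMoves]) (by simp [psi43, case2, Tuple.translate])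

theorem zero_f1_mem_shifts : (0, f1) ∈ shifts (case2 c f1 f2 f3 f4 t1 t2) := by
  simpa using neg_mem (mem_shifts_of_move (p := (0, -f1)) (g := psi41) (by simp [psiMoves])
    (by simp [psi41, case2, Tuple.translate, sub_eq_add_neg]))

theorem zero_f2_mem_shifts : (0, f2) ∈ shifts (case2 c f1 f2 f3 f4 t1 t2) := by
  simpa using neg_mem (mem_shifts_of_move (p := (0, -f2)) (g := psi32) (by simp [psiMoves])
    (by simp [psi32, case2, Tuple.translate, sub_eq_add_neg]))

theorem c_zero_mem_shifts : (c, 0) ∈ shifts (case2 c f1 f2 f3 f4 t1 t2) := by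
  have h : (f3 + c, 0) ∈ shifts (case2 c f1 f2 f3 f4 t1 t2) := by
    rw [(psiEquiv_case2_add_f3 (f3 := f3) 1).shifts_eq]
    simpa using f3_zero_mem_shifts
  simpa using sub_mem h f3_zero_mem_shifts

theorem zero_c_mem_shifts : (0, c) ∈ shifts (case2 c f1 f2 f3 f4 t1 t2) := by
  have h : (0, f1 - c) ∈ shifts (case2 c f1 f2 f3 f4 t1 t2) := by
    rw [(psiEquiv_case2_sub_f1 (f1 := f1) 1).shifts_eq]
    simpa using zero_f1_mem_shifts
  simpa using sub_mem zero_f1_mem_shifts h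

theorem mk_mem_shifts_case2 {u v : ℤ} (hu : (Int.gcd c (Int.gcd f2 f3) : ℤ) ∣ u)
    (hv : (Int.gcd c (Int.gcd f1 f2) : ℤ) ∣ v) :
    (u, v) ∈ shifts (case2 c f1 f2 f3 f4 t1 t2) := by
  set H := shifts (case2 c f1 f2 f3 f4 t1 t2)
  have hu : u ∈ H.comap (AddMonoidHom.inl ℤ ℤ) :=
    Int.zmultiples_gcd_gcd_le c_zero_mem_shifts f2_zero_mem_shifts f3_zero_mem_shifts
      (Int.mem_zmultiples_iff.2 hu)
  have hv : v ∈ H.comap (AddMonoidHom.inr ℤ ℤ) :=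
    Int.zmultiples_gcd_gcd_le zero_c_mem_shifts zero_f1_mem_shifts zero_f2_mem_shifts
      (Int.mem_zmultiples_iff.2 hv)
  simpa using add_mem (AddSubgroup.mem_comap.1 hu) (AddSubgroup.mem_comap.1 hv)

theorem psiEquiv_case2_of_modEq {f1' f3' f4' t1' t2' : ℤ} (hc : c ≠ 0)
    (h1 : (Int.gcd c (Int.gcd f2 f3) : ℤ) ∣ f1) (h3 : (Int.gcd c (Int.gcd f1 f2) : ℤ) ∣ f3)
    (hf1 : f1 ≡ f1' [ZMOD c]) (hf3 : f3 ≡ f3' [ZMOD c]) (hf4 : f4 ≡ f4' [ZMOD c])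
    (ht1 : c * t1 + f1 * f4 ≡ c * t1' + f1' * f4'
      [ZMOD c * Int.gcd c (Int.gcd f1 (Int.gcd f2 f3))])
    (ht2 : c * t2 + f3 * f4 ≡ c * t2' + f3' * f4'
      [ZMOD c * Int.gcd c (Int.gcd f1 (Int.gcd f2 f3))]) :
    PsiEquiv (case2 c f1 f2 f3 f4 t1 t2) (case2 c f1' f2 f3' f4' t1' t2') := by
  set d : ℤ := ↑(Int.gcd c (Int.gcd f1 (Int.gcd f2 f3)))
  obtain ⟨s1, s2, hs⟩ := exists_psiEquiv_case2_of_modEq (f2 := f2) (t1 := t1) (t2 := t2) hf1 hf3 hf4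
  obtain ⟨-, -, -, -, hs1, hs2⟩ :=
    Case2Congr.of_psiEquiv (Int.gcd_dvd_left _ _) (case2Slice_case2_gcd c f1 f2 f3 f4 t1 t2) hs
  have hu : s1 ≡ t1' [ZMOD d] :=
    (Int.ModEq.add_right_cancel' _ (hs1.symm.trans ht1)).mul_left_cancel' hc
  have hv : s2 ≡ t2' [ZMOD d] :=
    (Int.ModEq.add_right_cancel' _ (hs2.symm.trans ht2)).mul_left_cancel' hc
  have h1d : (Int.gcd c (Int.gcd f2 f3) : ℤ) ∣ d :=
    Int.dvd_coe_gcd (Int.gcd_dvd_left _ _) (Int.dvd_coe_gcd h1 (Int.gcd_dvd_right _ _))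
  have h3d : (Int.gcd c (Int.gcd f1 f2) : ℤ) ∣ d := by
    simp only [d, Int.coe_gcd, dvd_gcd_iff] at h3 ⊢
    exact ⟨gcd_dvd_left _ _, (gcd_dvd_right _ _).trans (gcd_dvd_left _ _),
      (gcd_dvd_right _ _).trans (gcd_dvd_right _ _), h3⟩
  have hp := mk_mem_shifts_case2 (f4 := f4) (t1 := t1) (t2 := t2) (h1d.trans hu.dvd)
    (h3d.trans hv.dvd)
  simpa [case2_translate] using hp.trans (hs.translate _)

end Case2Moves

theorem classification_case2_general (c1 f1 f2 f3 f4 t1 t2 f1' f2' f3' f4' t1' t2' : ℤ)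
    (hc1 : c1 ≠ 0)
    (h1 : (Int.gcd c1 (Int.gcd f2 f3) : ℤ) ∣ f1)
    (h3 : (Int.gcd c1 (Int.gcd f1 f2) : ℤ) ∣ f3) :
    PsiEquiv ⟨c1, 0, c1, 0, 0, 0, f1, f2, f3, f4, t1, t2⟩
        ⟨c1, 0, c1, 0, 0, 0, f1', f2', f3', f4', t1', t2'⟩ ↔
      (c1 ∣ f1 - f1' ∧
        f2 = f2' ∧
        c1 ∣ f3 - f3' ∧
        c1 ∣ f4 - f4' ∧
        c1 * (Int.gcd c1 (Int.gcd f1 (Int.gcd f2 f3)) : ℤ) ∣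
          (c1 * t1 + f1 * f4) - (c1 * t1' + f1' * f4') ∧
        c1 * (Int.gcd c1 (Int.gcd f1 (Int.gcd f2 f3)) : ℤ) ∣
          (c1 * t2 + f3 * f4) - (c1 * t2' + f3' * f4')) := by
  constructor
  · intro h
    obtain ⟨e1, e2, e3, e4, e5, e6⟩ :=
      Case2Congr.of_psiEquiv (Int.gcd_dvd_left _ _) (case2Slice_case2_gcd c1 f1 f2 f3 f4 t1 t2) h
    exact ⟨e1.symm.dvd, e2, e3.symm.dvd, e4.symm.dvd, e5.symm.dvd, e6.symm.dvd⟩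
  · rintro ⟨e1, rfl, e3, e4, e5, e6⟩
    exact psiEquiv_case2_of_modEq hc1 h1 h3 (Int.modEq_of_dvd e1).symm
      (Int.modEq_of_dvd e3).symm (Int.modEq_of_dvd e4).symm (Int.modEq_of_dvd e5).symm
      (Int.modEq_of_dvd e6).symm

/-- Classification when c₂ = c₄ = c₅ = c₆ = 0, c₃ = c₁ ≠ 0, gcd(c₁,f₂,f₃) ∣ f₁ and
gcd(c₁,f₁,f₂) ∣ f₃: two such tuples are ψ-equivalent iff f₁ ≡ f₁′, f₃ ≡ f₃′,
f₄ ≡ f₄′ (mod c₁), f₂ = f₂′, and c₁t₁+f₁f₄, c₁t₂+f₃f₄ agree modulo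
c₁·gcd(c₁,f₁,f₂,f₃). -/
theorem classification_case2 (c1 f1 f2 f3 f4 t1 t2 f1' f2' f3' f4' t1' t2' : ℤ)
    (hc1 : c1 ≠ 0)
    (h1 : (Int.gcd c1 (Int.gcd f2 f3) : ℤ) ∣ f1)
    (h1' : (Int.gcd c1 (Int.gcd f2' f3') : ℤ) ∣ f1')
    (h3 : (Int.gcd c1 (Int.gcd f1 f2) : ℤ) ∣ f3)
    (h3' : (Int.gcd c1 (Int.gcd f1' f2') : ℤ) ∣ f3') :
    PsiEquiv ⟨c1, 0, c1, 0, 0, 0, f1, f2, f3, f4, t1, t2⟩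
        ⟨c1, 0, c1, 0, 0, 0, f1', f2', f3', f4', t1', t2'⟩ ↔
      (c1 ∣ f1 - f1' ∧
        f2 = f2' ∧
        c1 ∣ f3 - f3' ∧
        c1 ∣ f4 - f4' ∧
        c1 * (Int.gcd c1 (Int.gcd f1 (Int.gcd f2 f3)) : ℤ) ∣
          (c1 * t1 + f1 * f4) - (c1 * t1' + f1' * f4') ∧
        c1 * (Int.gcd c1 (Int.gcd f1 (Int.gcd f2 f3)) : ℤ) ∣
          (c1 * t2 + f3 * f4) - (c1 * t2' + f3' * f4')) :=
  classification_case2_general c1 f1 f2 f3 f4 t1 t2 f1' f2' f3' f4' t1' t2' hc1 h1 h3
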